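/- (Negative mutual dependence for uniform 4-colorings.) Let E be a finite set and let f:E→{a,b,c,d} be a uniformly random coloring, each element of E receiving independently a uniformly random color among the four colors. For distinct colors s,t, let E_{st}∈{0,1}^E be the indicator configuration of {e∈E : f(e)∈{s,t}}. Then for any closed-upward events U,V,W ⊆ {0,1}^E, P(E_{ab}∈U and E_{ac}∈V and E_{bc}∈W) ≤ P(E_{ab}∈U)·P(E_{ac}∈V)·P(E_{bc}∈W). -/

import Mathlib

/-!
Encode a coloring `f` by the pair `(x, y) = (E_ab f, E_ac f)`. This is a bijection onto pairs of
configurations, so `x` and `y` are independent fair-coin configurations, and `E_bc f = x ∆ y`.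
The joint probability is therefore the average over `x ∈ U` of `g x = P(y ∈ V, x ∆ y ∈ W)`.
The function `g` is decreasing (a rearrangement inequality, one coordinate at a time), so the
Harris inequality gives `E[1_U g] ≤ P(U) E[g]`, and `E[g] = P(V) P(W)` because `x ∆ y` is
uniform for every fixed `y`.
-/

namespace ColoredPerc

/-- The four colors. -/
inductive Color : Type
  | a | b | c | d
deriving DecidableEq

instance : Fintype Color :=
  ⟨{Color.a, Color.b, Color.c, Color.d}, fun x => by cases x <;> simp⟩

variable {E : Type*} [Fintype E] [DecidableEq E]

/-- Probability of an event for a uniformly random coloring `f : E → Color`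
(each element of `E` gets, independently, a uniformly random color). -/
noncomputable def PrCol (A : Set (E → Color)) : ℝ :=
  ∑ f : E → Color, A.indicator (fun _ => (1 / 4 : ℝ) ^ Fintype.card E) f

/-- `E_{st}`: the indicator configuration of `{e : f e ∈ {s, t}}`. -/
def Est (s t : Color) (f : E → Color) : E → Bool :=
  fun e => decide (f e = s ∨ f e = t)

/-- An event of configurations in `{0,1}^E` is closed upward if it is preserved by
turning more coordinates to `true`. -/
def UpwardClosed (A : Set (E → Bool)) : Prop :=
  ∀ C₁ C₂ : E → Bool, C₁ ∈ A → (∀ e, C₁ e = true → C₂ e = true) → C₂ ∈ A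

open Finset
open scoped symmDiff

/-- **Harris inequality**, from FKG applied to the nonnegative monotone functions `f - f ⊥` and
`g ⊥ - g`. -/
theorem card_mul_sum_mul_le_sum_mul_sum_of_monotone_of_antitone {α β : Type*} [DistribLattice α]
    [BoundedOrder α] [Fintype α] [CommRing β] [LinearOrder β] [IsStrictOrderedRing β]
    {f g : α → β} (hf : Monotone f) (hg : Antitone g) :
    Fintype.card α * ∑ a, f a * g a ≤ (∑ a, f a) * ∑ a, g a := by
  have key := fkg (fun a => f a - f ⊥) (fun a => g ⊥ - g a) 1
    (fun _ => zero_le_one) (fun _ => sub_nonneg.2 (hf bot_le)) (fun _ => sub_nonneg.2 (hg bot_le))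
    (fun _ _ h => sub_le_sub_right (hf h) _) (fun _ _ h => sub_le_sub_left (hg h) _)
    (fun _ _ => le_rfl)
  simp only [Pi.one_apply, one_mul, sum_sub_distrib, sum_const, card_univ, nsmul_eq_mul,
    mul_sub, sub_mul, ← mul_sum, ← sum_mul] at key
  linear_combination key

theorem mul_add_mul_le_mul_add_mul_of_monotone {α β : Type*} [Preorder α] [Semiring β]
    [PartialOrder β] [ExistsAddOfLE β] [MulPosMono β] [AddLeftMono β] [AddLeftReflectLE β]
    {u v : α → β} (hu : Monotone u) (hv : Monotone v) {y y' z z' : α}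
    (h : y ≤ y' ∧ z ≤ z' ∨ y' ≤ y ∧ z' ≤ z) :
    u y * v z' + u y' * v z ≤ u y * v z + u y' * v z' := by
  rcases h with ⟨hy, hz⟩ | ⟨hy, hz⟩
  · exact mul_add_mul_le_mul_add_mul (hu hy) (hv hz)
  · rw [add_comm, add_comm (u y * _)]
    exact mul_add_mul_le_mul_add_mul (hu hy) (hv hz)

theorem sum_comp_symmDiff {α M : Type*} [GeneralizedBooleanAlgebra α] [Fintype α]
    [AddCommMonoid M] (F : α → M) (a : α) : ∑ x, F (a ∆ x) = ∑ x, F x :=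
  Equiv.sum_comp ((symmDiff_right_involutive a).toPerm _) F

theorem sum_sum_mul_symmDiff {α β : Type*} [GeneralizedBooleanAlgebra α] [Fintype α]
    [NonUnitalNonAssocSemiring β] (u v : α → β) :
    ∑ x, ∑ y, u y * v (x ∆ y) = (∑ y, u y) * ∑ z, v z := by
  rw [sum_comm, sum_mul]
  refine sum_congr rfl fun y _ => ?_
  simp_rw [← mul_sum, symmDiff_comm _ y, sum_comp_symmDiff]

/-- Raising coordinate `i` of `x` to `x ∆ d` swaps the `v`-arguments of the terms at `y` and
`d ∆ y`; since `y ≤ d ∆ y ↔ x ∆ y ≤ d ∆ (x ∆ y)`, the rearrangement inequality applies to each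
such pair. -/
theorem antitone_sum_mul_symmDiff {ι β : Type*} [Fintype ι] [DecidableEq ι] [CommRing β]
    [LinearOrder β] [IsStrictOrderedRing β] {u v : (ι → Bool) → β} (hu : Monotone u)
    (hv : Monotone v) :
    Antitone fun x => ∑ y, u y * v (x ∆ y) := by
  classical
  let _ := Fintype.toLocallyFiniteOrder (α := ι → Bool)
  refine (antitone_iff_forall_covBy _).2 fun x x' hxx' => ?_
  obtain ⟨i, hi, hj⟩ := Pi.covBy_iff.1 hxx'
  obtain ⟨hxi, hx'i⟩ := Bool.lt_iff.1 hi.lt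
  set d := x ∆ x'
  have hdi : d i = true := by simp [d, hxi, hx'i]
  have hdj : ∀ j ≠ i, d j = false := fun j hji => by simp [d, hj j hji]
  have hx' : x' = x ∆ d := (symmDiff_symmDiff_cancel_left x x').symm
  have hcomparable : ∀ z : ι → Bool, (z i = false → z ≤ d ∆ z) ∧ (z i = true → d ∆ z ≤ z) := by
    refine fun z => ⟨fun hz j => ?_, fun hz j => ?_⟩ <;> rcases eq_or_ne j i with rfl | hji <;>
      simp [*]
  have hpair : ∀ y, u y * v (x' ∆ y) + u (d ∆ y) * v (x' ∆ (d ∆ y))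
      ≤ u y * v (x ∆ y) + u (d ∆ y) * v (x ∆ (d ∆ y)) := by
    intro y
    have h1 : x' ∆ y = x ∆ (d ∆ y) := by rw [hx', symmDiff_assoc]
    have h2 : x' ∆ (d ∆ y) = x ∆ y := by
      rw [hx', symmDiff_assoc, symmDiff_symmDiff_cancel_left]
    rw [h1, h2]
    refine mul_add_mul_le_mul_add_mul_of_monotone hu hv ?_
    have hxdy : x ∆ (d ∆ y) = d ∆ (x ∆ y) := symmDiff_left_comm x d y
    rw [hxdy]
    cases hy : y i
    · exact .inl ⟨(hcomparable y).1 hy, (hcomparable _).1 (by simp [hxi, hy])⟩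
    · exact .inr ⟨(hcomparable y).2 hy, (hcomparable _).2 (by simp [hxi, hy])⟩
  have hsum := sum_le_sum fun y (_ : y ∈ univ) => hpair y
  simp only [sum_add_distrib, sum_comp_symmDiff (fun y => u y * v (x' ∆ y)),
    sum_comp_symmDiff (fun y => u y * v (x ∆ y))] at hsum
  linarith

theorem IsUpperSet.monotone_indicator_one {α M : Type*} [Preorder α] [Zero M] [One M]
    [Preorder M] [ZeroLEOneClass M] {s : Set α} (hs : IsUpperSet s) :
    Monotone (s.indicator (1 : α → M)) := by
  intro a b hab
  by_cases ha : a ∈ s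
  · simp [ha, hs hab ha]
  · simp [ha, Set.indicator_nonneg]

theorem UpwardClosed.isUpperSet {ι : Type*} {A : Set (ι → Bool)} (hA : UpwardClosed A) :
    IsUpperSet A :=
  fun C₁ C₂ hle hC₁ => hA C₁ C₂ hC₁ fun e he => Bool.eq_true_of_true_le (he ▸ hle e)

theorem indicator_one_setOf_mem {α β M : Type*} [Zero M] [One M] (g : α → β) (s : Set β)
    (a : α) : {x | g x ∈ s}.indicator (1 : α → M) a = s.indicator 1 (g a) :=
  Set.indicator_comp_right (s := s) (g := 1) g

section Coloring

variable {ι : Type*}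

def ofBits : Bool → Bool → Color
  | true, true => .a
  | true, false => .b
  | false, true => .c
  | false, false => .d

def bitsEquiv : (ι → Color) ≃ (ι → Bool) × (ι → Bool) where
  toFun f := (Est .a .b f, Est .a .c f)
  invFun p e := ofBits (p.1 e) (p.2 e)
  left_inv f := funext fun e => by cases h : f e <;> simp [Est, ofBits, h]
  right_inv p := by
    refine Prod.ext (funext fun e => ?_) (funext fun e => ?_) <;>
      cases h1 : p.1 e <;> cases h2 : p.2 e <;> simp [Est, ofBits, h1, h2]

@[simp]
theorem est_ab_bitsEquiv_symm (p : (ι → Bool) × (ι → Bool)) :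
    Est .a .b (bitsEquiv.symm p) = p.1 :=
  congrArg Prod.fst (bitsEquiv.apply_symm_apply p)

@[simp]
theorem est_ac_bitsEquiv_symm (p : (ι → Bool) × (ι → Bool)) :
    Est .a .c (bitsEquiv.symm p) = p.2 :=
  congrArg Prod.snd (bitsEquiv.apply_symm_apply p)

@[simp]
theorem est_bc_bitsEquiv_symm (p : (ι → Bool) × (ι → Bool)) :
    Est .b .c (bitsEquiv.symm p) = p.1 ∆ p.2 := by
  funext e
  cases h1 : p.1 e <;> cases h2 : p.2 e <;> simp [bitsEquiv, Est, ofBits, h1, h2]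

variable [Fintype ι] [DecidableEq ι]

theorem prCol_eq_sum_bits (A : Set (ι → Color)) :
    PrCol A
      = (1 / 4 : ℝ) ^ Fintype.card ι * ∑ x, ∑ y, A.indicator 1 (bitsEquiv.symm (x, y)) := by
  rw [← Fintype.sum_prod_type', Fintype.sum_equiv bitsEquiv.symm _ (A.indicator 1) fun _ => rfl,
    PrCol, mul_sum]
  refine sum_congr rfl fun f _ => ?_
  by_cases hf : f ∈ A <;> simp [hf]

theorem prCol_est_ab_mem (U : Set (ι → Bool)) :
    PrCol {f : ι → Color | Est .a .b f ∈ U}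
      = (1 / 2 : ℝ) ^ Fintype.card ι * ∑ x, U.indicator 1 x := by
  simp only [prCol_eq_sum_bits, indicator_one_setOf_mem, est_ab_bitsEquiv_symm, sum_const,
    card_univ, Fintype.card_fun, Fintype.card_bool, nsmul_eq_mul, ← mul_sum]
  rw [← mul_assoc]
  norm_num [← mul_pow]

theorem prCol_est_ac_mem (V : Set (ι → Bool)) :
    PrCol {f : ι → Color | Est .a .c f ∈ V}
      = (1 / 2 : ℝ) ^ Fintype.card ι * ∑ y, V.indicator 1 y := by
  simp only [prCol_eq_sum_bits, indicator_one_setOf_mem, est_ac_bitsEquiv_symm, sum_const,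
    card_univ, Fintype.card_fun, Fintype.card_bool, nsmul_eq_mul]
  rw [← mul_assoc]
  norm_num [← mul_pow]

theorem prCol_est_bc_mem (W : Set (ι → Bool)) :
    PrCol {f : ι → Color | Est .b .c f ∈ W}
      = (1 / 2 : ℝ) ^ Fintype.card ι * ∑ z, W.indicator 1 z := by
  simp only [prCol_eq_sum_bits, indicator_one_setOf_mem, est_bc_bitsEquiv_symm,
    sum_comp_symmDiff (W.indicator 1), sum_const, card_univ, Fintype.card_fun, Fintype.card_bool,
    nsmul_eq_mul]
  rw [← mul_assoc]
  norm_num [← mul_pow]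

theorem prCol_est_mem_and (U V W : Set (ι → Bool)) :
    PrCol {f : ι → Color | Est .a .b f ∈ U ∧ Est .a .c f ∈ V ∧ Est .b .c f ∈ W}
      = (1 / 4 : ℝ) ^ Fintype.card ι
        * ∑ x, U.indicator 1 x * ∑ y, V.indicator 1 y * W.indicator 1 (x ∆ y) := by
  simp only [prCol_eq_sum_bits, Set.ofPred_and, Set.inter_indicator_one, Pi.mul_apply,
    indicator_one_setOf_mem, est_ab_bitsEquiv_symm, est_ac_bitsEquiv_symm, est_bc_bitsEquiv_symm,
    mul_sum]

end Coloring

/-- Negative mutual dependence for uniform 4-colorings: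
`P(E_{ab}∈U, E_{ac}∈V, E_{bc}∈W) ≤ P(E_{ab}∈U)·P(E_{ac}∈V)·P(E_{bc}∈W)`. -/
theorem negative_mutual_dependence
    (U V W : Set (E → Bool))
    (hU : UpwardClosed U) (hV : UpwardClosed V) (hW : UpwardClosed W) :
    PrCol {f : E → Color | Est Color.a Color.b f ∈ U ∧ Est Color.a Color.c f ∈ V ∧
                           Est Color.b Color.c f ∈ W}
      ≤ PrCol {f : E → Color | Est Color.a Color.b f ∈ U}
        * PrCol {f : E → Color | Est Color.a Color.c f ∈ V}
        * PrCol {f : E → Color | Est Color.b Color.c f ∈ W} := by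
  have harris := card_mul_sum_mul_le_sum_mul_sum_of_monotone_of_antitone
    (IsUpperSet.monotone_indicator_one (M := ℝ) hU.isUpperSet)
    (antitone_sum_mul_symmDiff (IsUpperSet.monotone_indicator_one hV.isUpperSet)
      (IsUpperSet.monotone_indicator_one hW.isUpperSet))
  rw [sum_sum_mul_symmDiff, Fintype.card_fun, Fintype.card_bool, Nat.cast_pow,
    Nat.cast_ofNat] at harris
  rw [prCol_est_mem_and, prCol_est_ab_mem, prCol_est_ac_mem, prCol_est_bc_mem]
  have h8 : (0 : ℝ) ≤ (1 / 8) ^ Fintype.card E := by positivity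
  refine (le_of_eq ?_).trans ((mul_le_mul_of_nonneg_left harris h8).trans (le_of_eq ?_))
  · rw [show (1 / 4 : ℝ) = 1 / 8 * 2 by norm_num, mul_pow]
    ring
  · rw [show (1 / 8 : ℝ) = 1 / 2 * (1 / 2) * (1 / 2) by norm_num, mul_pow, mul_pow]
    ring

end ColoredPerc
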